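/- For every w ∈ (0,1), the polynomials of the fourth-order interface stencil satisfy r_p(w) > 0 for all p = 1,2,…,12 and s_p(w) < 0 for all p = 1,2,3; in particular β := r₁ + r₂α² + r₃α > 0 for every α > 0 and every w ∈ (0,1). -/
import Mathlib


noncomputable def r1 (w : ℝ) : ℝ := (2*w+1)^2*(w+2)*(w-1)^2
noncomputable def r2 (w : ℝ) : ℝ := 4*w^5-4*w^4+5*w^3+6*w^2-5*w+2
noncomputable def r3 (w : ℝ) : ℝ := -8*w^5+6*w^3-2*w^2+4
noncomputable def r4 (w : ℝ) : ℝ := 4*w^4-4*w^3+w^2+1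
noncomputable def r5 (w : ℝ) : ℝ := -4*w^4+4*w^3-w^2+1
noncomputable def r6 (w : ℝ) : ℝ := -(2*w+1)^2*(w-1)^3
noncomputable def r7 (w : ℝ) : ℝ := 8*w^5-20*w^4+14*w^3-3*w^2+1
noncomputable def r8 (w : ℝ) : ℝ := -8*w^4+8*w^3+10*w^2-6*w+4
noncomputable def r9 (w : ℝ) : ℝ := 8*w^4-8*w^3-10*w^2+6*w+4
noncomputable def r10 (w : ℝ) : ℝ := 8*w^5-16*w^4+14*w^3-8*w^2-2*w+4
noncomputable def r11 (w : ℝ) : ℝ := 8*w^5-24*w^4+38*w^3-22*w^2+8*w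
noncomputable def r12 (w : ℝ) : ℝ := -16*w^5+40*w^4-52*w^3+30*w^2-6*w+4
noncomputable def s1 (w : ℝ) : ℝ := -8*w^5-8*w^4+10*w^3+26*w^2-10*w-10
noncomputable def s2 (w : ℝ) : ℝ := -8*w^5+8*w^4-22*w^3-18*w^2+10*w-10
noncomputable def s3 (w : ℝ) : ℝ := 16*w^5+12*w^3-8*w^2-20

theorem stmt3 (w : ℝ) (hw : w ∈ Set.Ioo (0 : ℝ) 1) :
    (0 < r1 w ∧ 0 < r2 w ∧ 0 < r3 w ∧ 0 < r4 w ∧ 0 < r5 w ∧ 0 < r6 w ∧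
      0 < r7 w ∧ 0 < r8 w ∧ 0 < r9 w ∧ 0 < r10 w ∧ 0 < r11 w ∧ 0 < r12 w) ∧
    (s1 w < 0 ∧ s2 w < 0 ∧ s3 w < 0) ∧
    (∀ α : ℝ, 0 < α → 0 < r1 w + r2 w * α^2 + r3 w * α) := by
  obtain ⟨h0, h1⟩ := hw
  have h2 : (0:ℝ) < 1 - w := by linarith
  have h3 : (0:ℝ) < 2*w + 1 := by linarith
  have hr1 : 0 < r1 w := by
    have e : r1 w = ((2*w+1)^2*(w+2))*(1-w)^2 := by unfold r1; ring
    rw [e]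
    exact mul_pos (mul_pos (pow_pos h3 2) (by linarith)) (pow_pos h2 2)
  have hr2 : 0 < r2 w := by
    unfold r2
    nlinarith [sq_nonneg w, sq_nonneg (w-1), mul_pos h0 h0, pow_pos h0 3, pow_pos h0 5]
  have hr3 : 0 < r3 w := by
    have e : r3 w = (1-w)*(8*w^4+8*w^3+2*w^2+4*w+4) := by unfold r3; ring
    rw [e]
    have : (0:ℝ) < 8*w^4+8*w^3+2*w^2+4*w+4 := by positivity
    exact mul_pos h2 this
  refine ⟨⟨hr1, hr2, hr3, ?_, ?_, ?_, ?_, ?_, ?_, ?_, ?_, ?_⟩, ⟨?_, ?_, ?_⟩, ?_⟩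
  · unfold r4; nlinarith [sq_nonneg (2*w^2-w), sq_nonneg w]
  · have e : r5 w = (1-w)*((2*w+1)*(2*w^2-w+1)) := by unfold r5; ring
    rw [e]
    have h4 : (0:ℝ) < 2*w^2-w+1 := by nlinarith [sq_nonneg (4*w-1)]
    exact mul_pos h2 (mul_pos h3 h4)
  · have e : r6 w = (2*w+1)^2*(1-w)^3 := by unfold r6; ring
    rw [e]
    exact mul_pos (pow_pos h3 2) (pow_pos h2 3)
  · unfold r7; nlinarith [sq_nonneg w, sq_nonneg (w-1), mul_pos h0 h0, pow_pos h0 3]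
  · unfold r8; nlinarith [mul_pos (pow_pos h0 3) h2, sq_nonneg (10*w-3)]
  · unfold r9; nlinarith [sq_nonneg w, sq_nonneg (w-1), mul_pos h0 h0]
  · unfold r10; nlinarith [sq_nonneg w, sq_nonneg (w-1), mul_pos h0 h0, pow_pos h0 3]
  · have e : r11 w = 2*w*((2*w^2-3*w)^2 + (10*w^2-11*w+4)) := by unfold r11; ring
    rw [e]
    have h4 : (0:ℝ) < (2*w^2-3*w)^2 + (10*w^2-11*w+4) := by
      nlinarith [sq_nonneg (2*w^2-3*w), sq_nonneg (20*w-11)]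
    exact mul_pos (by linarith) h4
  · have e : r12 w = (1-w)*(16*w^4-24*w^3+28*w^2-2*w+4) := by unfold r12; ring
    rw [e]
    have h4 : (0:ℝ) < 16*w^4-24*w^3+28*w^2-2*w+4 := by
      nlinarith [sq_nonneg (4*w^2-3*w), sq_nonneg (19*w-1)]
    exact mul_pos h2 h4
  · unfold s1; nlinarith [sq_nonneg w, sq_nonneg (w-1), mul_pos h0 h0, pow_pos h0 3]
  · unfold s2; nlinarith [sq_nonneg w, sq_nonneg (w-1), mul_pos h0 h0, pow_pos h0 3]
  · have e : s3 w = -((1-w)*(16*w^4+16*w^3+28*w^2+20*w+20)) := by unfold s3; ring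
    rw [e]
    have : (0:ℝ) < 16*w^4+16*w^3+28*w^2+20*w+20 := by positivity
    linarith [mul_pos h2 this]
  · intro a ha
    have := mul_pos hr2 (mul_pos ha ha)
    have := mul_pos hr3 ha
    nlinarith [sq_nonneg a]
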